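/- arXiv:1709.08696 — 2 statements merged into one kernel-verified Lean document; each statement's English description precedes it below -/
import Mathlib

section
/- Let Σ be a finite alphabet with a partial order ≤, and let Σ̃ = Σ ∪ {0} (with 0 a fresh letter) be partially ordered by extending ≤ so that σ < 0 for all σ ∈ Σ. Then for any language L ⊆ Σ*, the language (L·{0})* ⊆ Σ̃* has exponential antichain growth (with respect to the lexicographic order induced on Σ̃*) if and only if L is not a chain. -/
open Filter
open scoped ENNReal

/-- The lexicographic partial order on words induced by a strict order `r` on letters:
`ε R w` for all `w`, and `(x :: w) R (y :: w')` iff `r x y`, or `x = y` and `w R w'`. -/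
inductive LexR {α : Type*} (r : α → α → Prop) : List α → List α → Prop
  | nil (w : List α) : LexR r [] w
  | head {x y : α} (w w' : List α) (h : r x y) : LexR r (x :: w) (y :: w')
  | cons (x : α) {w w' : List α} (h : LexR r w w') : LexR r (x :: w) (x :: w')

/-- Two words are comparable (`u ∼ v`) if `u R v` or `v R u`. -/
def LexComp {α : Type*} (r : α → α → Prop) (u v : List α) : Prop :=
  LexR r u v ∨ LexR r v u

/-- A language is an antichain if any two distinct words of it are incomparable. -/
def IsAntichainLang {α : Type*} (r : α → α → Prop) (L : Set (List α)) : Prop :=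
  ∀ u ∈ L, ∀ v ∈ L, u ≠ v → ¬ LexComp r u v

/-- A language is a quasiantichain if any two words of it are incomparable or one is a
prefix of the other. -/
def IsQuasiantichainLang {α : Type*} (r : α → α → Prop) (L : Set (List α)) : Prop :=
  ∀ u ∈ L, ∀ v ∈ L, u <+: v ∨ v <+: u ∨ ¬ LexComp r u v

/-- A language is a chain if any two words of it are comparable. -/
def IsChainLang {α : Type*} (r : α → α → Prop) (L : Set (List α)) : Prop :=
  ∀ u ∈ L, ∀ v ∈ L, LexComp r u v

/-- `|L|_{=n}`: the number of words of length `n` in `L`. -/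
noncomputable def countLen {α : Type*} (L : Set (List α)) (n : ℕ) : ℕ :=
  {w ∈ L | w.length = n}.ncard

/-- `L` has exponential growth of order `ε` if `limsup |L|_{=n} / 2^(εn) > 0`. -/
def ExpGrowthOrder {α : Type*} (L : Set (List α)) (ε : ℝ) : Prop :=
  0 < Filter.limsup (fun n : ℕ => (countLen L n : ℝ≥0∞) / (2 : ℝ≥0∞) ^ (ε * n)) Filter.atTop

/-- `L` has exponential growth if it has exponential growth of some order `ε > 0`. -/
def ExpGrowth {α : Type*} (L : Set (List α)) : Prop :=
  ∃ ε : ℝ, 0 < ε ∧ ExpGrowthOrder L ε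

/-- `L` has polynomial growth if `limsup |L|_{=n} / n^k < ∞` for some `k`. -/
def PolyGrowth {α : Type*} (L : Set (List α)) : Prop :=
  ∃ k : ℕ, Filter.limsup (fun n : ℕ => (countLen L n : ℝ≥0∞) / (n : ℝ≥0∞) ^ k) Filter.atTop < ⊤

/-- `L` is an antichain family if the set of words of length `n` in `L` is an antichain
for every `n`. -/
def AntichainFamily {α : Type*} (r : α → α → Prop) (L : Set (List α)) : Prop :=
  ∀ n : ℕ, IsAntichainLang r {w ∈ L | w.length = n}

/-- `L` has exponential antichain growth if some subset of `L` is an antichain family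
with exponential growth. -/
def ExpAntichainGrowth {α : Type*} (r : α → α → Prop) (L : Set (List α)) : Prop :=
  ∃ L' ⊆ L, AntichainFamily r L' ∧ ExpGrowth L'

/-- `L` has polynomial antichain growth if every antichain family contained in `L`
has polynomial growth. -/
def PolyAntichainGrowth {α : Type*} (r : α → α → Prop) (L : Set (List α)) : Prop :=
  ∀ L' ⊆ L, AntichainFamily r L' → PolyGrowth L'

/-- The Kleene star of a language: all finite concatenations of words of `L`. -/
def KStarLang {α : Type*} (L : Set (List α)) : Set (List α) :=
  {w | ∃ S : List (List α), (∀ u ∈ S, u ∈ L) ∧ w = S.flatten}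

/-- The order on `Σ ∪ {0}`, extending the partial order on `Σ`, where the fresh letter
`0` (encoded as `none`) lies strictly above every letter of `Σ`. -/
def extRel0 {Sigma : Type*} [PartialOrder Sigma] : Option Sigma → Option Sigma → Prop :=
  fun x y =>
    match x, y with
    | some a, some b => a < b
    | some _, none => True
    | _, _ => False

/-! If `L` is a chain, then so is `(L·{0})*`: two concatenations of marked words agree up to the
first pair of distinct factors `u0`, `v0`, and there the comparison of `u` and `v` decides (the
end marker `0` lies above every letter, so a proper prefix `u` of `v` yields `v0 < u0`). Thus an
antichain family inside `(L·{0})*` has at most one word of each length.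

If `u, v ∈ L` are incomparable, then so are `x = u0v0` and `y = v0u0`, which have the same length
`m`, and incomparability survives appending arbitrary suffixes. Hence the `2^k` words
`z₁ ⋯ z_k` with `zᵢ ∈ {x, y}` form an antichain of words of length `k m`. -/

open Function

section LexR

variable {α : Type*} {r : α → α → Prop}

theorem LexR.refl (w : List α) : LexR r w w := by
  induction w with
  | nil => exact .nil _
  | cons x w ih => exact .cons x ih

theorem lexR_cons_cons_iff {x y : α} {w w' : List α} :
    LexR r (x :: w) (y :: w') ↔ r x y ∨ x = y ∧ LexR r w w' := by
  constructor
  · rintro (_ | ⟨_, _, h⟩ | ⟨_, h⟩)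
    exacts [.inl h, .inr ⟨rfl, h⟩]
  · rintro (h | ⟨rfl, h⟩)
    exacts [.head _ _ h, .cons _ h]

theorem not_lexR_cons_nil (x : α) (w : List α) : ¬ LexR r (x :: w) [] := nofun

theorem lexR_append_left_iff [Std.Irrefl r] (p : List α) {w w' : List α} :
    LexR r (p ++ w) (p ++ w') ↔ LexR r w w' := by
  induction p with
  | nil => rfl
  | cons x p ih => simp [lexR_cons_cons_iff, Std.Irrefl.irrefl, ih]

theorem lexComp_append_left_iff [Std.Irrefl r] (p : List α) {w w' : List α} :
    LexComp r (p ++ w) (p ++ w') ↔ LexComp r w w' := by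
  simp only [LexComp, lexR_append_left_iff]

theorem LexComp.symm {u v : List α} (h : LexComp r u v) : LexComp r v u := Or.symm h

theorem ne_of_not_lexComp {u v : List α} (h : ¬ LexComp r u v) : u ≠ v := by
  rintro rfl
  exact h (.inl (.refl u))

theorem length_pos_of_not_lexComp {x y : List α} (h : ¬ LexComp r x y) : 0 < x.length :=
  List.length_pos_of_ne_nil fun hx => h (.inl (hx ▸ .nil y))

theorem not_lexComp_append {x y : List α} (h : ¬ LexComp r x y) (s t : List α) :
    ¬ LexComp r (x ++ s) (y ++ t) := by
  induction x generalizing y with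
  | nil => exact absurd (.inl (.nil y)) h
  | cons a x ih =>
    cases y with
    | nil => exact absurd (.inr (.nil _)) h
    | cons b y =>
      rintro (hc | hc) <;> rcases lexR_cons_cons_iff.1 hc with hlt | ⟨rfl, htail⟩
      · exact h (.inl (.head _ _ hlt))
      · exact ih (fun hxy => h (hxy.imp (.cons _) (.cons _))) (.inl htail)
      · exact h (.inr (.head _ _ hlt))
      · exact ih (fun hxy => h (hxy.imp (.cons _) (.cons _))) (.inr htail)

theorem lexR_map_iff {β : Type*} {s : β → β → Prop} {f : α → β} (hf : Injective f)
    (hfs : ∀ a b, s (f a) (f b) ↔ r a b) {u v : List α} :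
    LexR s (u.map f) (v.map f) ↔ LexR r u v := by
  induction u generalizing v with
  | nil => exact iff_of_true (.nil _) (.nil _)
  | cons a u ih =>
    cases v with
    | nil => exact iff_of_false (not_lexR_cons_nil _ _) (not_lexR_cons_nil _ _)
    | cons b v => simp only [List.map_cons, lexR_cons_cons_iff, hfs, hf.eq_iff, ih]

theorem lexComp_map_iff {β : Type*} {s : β → β → Prop} {f : α → β} (hf : Injective f)
    (hfs : ∀ a b, s (f a) (f b) ↔ r a b) {u v : List α} :
    LexComp s (u.map f) (v.map f) ↔ LexComp r u v := by
  simp only [LexComp, lexR_map_iff hf hfs]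

end LexR

section KStarLang

variable {α : Type*} {M : Set (List α)}

theorem nil_mem_kStarLang : [] ∈ KStarLang M := ⟨[], nofun, rfl⟩

theorem mem_kStarLang_of_mem {x : List α} (hx : x ∈ M) : x ∈ KStarLang M :=
  ⟨[x], by simpa using hx, by simp⟩

theorem append_mem_kStarLang {x y : List α} (hx : x ∈ KStarLang M) (hy : y ∈ KStarLang M) :
    x ++ y ∈ KStarLang M := by
  obtain ⟨S, hS, rfl⟩ := hx
  obtain ⟨T, hT, rfl⟩ := hy
  exact ⟨S ++ T, fun u hu => (List.mem_append.1 hu).elim (hS u) (hT u), List.flatten_append.symm⟩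

theorem isChainLang_kStarLang {r : α → α → Prop} [Std.Irrefl r]
    (hM : ∀ x ∈ M, ∀ y ∈ M, x ≠ y → ∀ s t, LexComp r (x ++ s) (y ++ t)) :
    IsChainLang r (KStarLang M) := by
  rintro _ ⟨S, hS, rfl⟩ _ ⟨T, hT, rfl⟩
  induction S generalizing T with
  | nil => exact .inl (.nil _)
  | cons x S ih =>
    cases T with
    | nil => exact .inr (.nil _)
    | cons y T =>
      simp only [List.mem_cons, forall_eq_or_imp] at hS hT
      rw [List.flatten_cons, List.flatten_cons]
      by_cases hxy : x = y
      · subst hxy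
        exact (lexComp_append_left_iff x).2 (ih hS.2 T hT.2)
      · exact hM x hS.1 y hT.1 hxy _ _

end KStarLang

section EncodeBits

variable {α : Type*} {r : α → α → Prop} {x y : List α}

def encodeBits (x y : List α) (s : List Bool) : List α :=
  (s.map fun b => cond b x y).flatten

@[simp] theorem encodeBits_nil : encodeBits x y [] = [] := rfl

@[simp] theorem encodeBits_cons (b : Bool) (s : List Bool) :
    encodeBits x y (b :: s) = cond b x y ++ encodeBits x y s := rfl

theorem length_encodeBits (hxy : x.length = y.length) (s : List Bool) :
    (encodeBits x y s).length = s.length * x.length := by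
  induction s with
  | nil => simp
  | cons b s ih => cases b <;> simp [ih, hxy, Nat.succ_mul, Nat.add_comm]

theorem encodeBits_mem_kStarLang {M : Set (List α)} (hx : x ∈ KStarLang M)
    (hy : y ∈ KStarLang M) (s : List Bool) : encodeBits x y s ∈ KStarLang M := by
  induction s with
  | nil => exact nil_mem_kStarLang
  | cons b s ih => cases b <;> exact append_mem_kStarLang ‹_› ih

theorem not_lexComp_encodeBits [Std.Irrefl r] (hxy : ¬ LexComp r x y) {s t : List Bool}
    (hlen : s.length = t.length) (hst : s ≠ t) :
    ¬ LexComp r (encodeBits x y s) (encodeBits x y t) := by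
  have hyx : ¬ LexComp r y x := fun h => hxy h.symm
  induction s generalizing t with
  | nil => exact absurd (List.eq_nil_of_length_eq_zero hlen.symm).symm hst
  | cons b s ih =>
    obtain _ | ⟨c, t⟩ := t
    · simp at hlen
    simp only [encodeBits_cons]
    by_cases hbc : b = c
    · subst hbc
      rw [lexComp_append_left_iff]
      exact ih (Nat.succ.inj hlen) fun h => hst (h ▸ rfl)
    · cases b <;> cases c <;> first | exact absurd rfl hbc | exact not_lexComp_append ‹_› _ _

theorem antichainFamily_range_encodeBits [Std.Irrefl r] (hxy : ¬ LexComp r x y)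
    (hlen : x.length = y.length) : AntichainFamily r (Set.range (encodeBits x y)) := by
  have hpos := length_pos_of_not_lexComp hxy
  rintro n _ ⟨⟨s, rfl⟩, hs⟩ _ ⟨⟨t, rfl⟩, ht⟩ hne
  rw [length_encodeBits hlen] at hs ht
  exact not_lexComp_encodeBits hxy (Nat.eq_of_mul_eq_mul_right hpos (hs.trans ht.symm))
    fun h => hne (h ▸ rfl)

theorem ncard_setOf_length_eq (α : Type*) [Fintype α] (k : ℕ) :
    {s : List α | s.length = k}.ncard = Fintype.card α ^ k := by
  rw [← Nat.card_coe_set_eq]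
  exact (Nat.card_eq_fintype_card (α := List.Vector α k)).trans (card_vector k)

theorem countLen_range_encodeBits [Std.Irrefl r] (hxy : ¬ LexComp r x y)
    (hlen : x.length = y.length) (k : ℕ) :
    countLen (Set.range (encodeBits x y)) (k * x.length) = 2 ^ k := by
  have hpos := length_pos_of_not_lexComp hxy
  have hslice : {w ∈ Set.range (encodeBits x y) | w.length = k * x.length} =
      encodeBits x y '' {s | s.length = k} := by
    ext w
    simp only [Set.mem_ofPred_eq, Set.mem_range, Set.mem_image]
    constructor
    · rintro ⟨⟨s, rfl⟩, hs⟩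
      exact ⟨s, Nat.eq_of_mul_eq_mul_right hpos (by rwa [length_encodeBits hlen] at hs), rfl⟩
    · rintro ⟨s, rfl, rfl⟩
      exact ⟨⟨s, rfl⟩, length_encodeBits hlen s⟩
  have hinj : Set.InjOn (encodeBits x y) {s | s.length = k} := fun s hs t ht heq => by
    by_contra hst
    exact ne_of_not_lexComp (not_lexComp_encodeBits hxy (hs.trans ht.symm) hst) heq
  rw [countLen, hslice, hinj.ncard_image, ncard_setOf_length_eq, Fintype.card_bool]

end EncodeBits

section Growth

variable {α : Type*} {L : Set (List α)}

theorem not_expGrowth_of_countLen_le_one (hL : ∀ n, countLen L n ≤ 1) : ¬ ExpGrowth L := by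
  rintro ⟨ε, hε, hpos⟩
  set q : ℝ≥0∞ := 2 ^ (-ε)
  have hbound : ∀ n : ℕ, (countLen L n : ℝ≥0∞) / 2 ^ (ε * n) ≤ q ^ n := fun n =>
    calc (countLen L n : ℝ≥0∞) / 2 ^ (ε * n)
        ≤ 1 / 2 ^ (ε * n) := ENNReal.div_le_div_right (by exact_mod_cast hL n) _
      _ = q ^ n := by
        rw [one_div, ← ENNReal.rpow_neg, neg_mul_eq_neg_mul, ENNReal.rpow_mul,
          ENNReal.rpow_natCast]
  have hq : q < 1 := ENNReal.rpow_lt_one_of_one_lt_of_neg (by norm_num) (by linarith)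
  have hlimsup := limsup_le_limsup (f := atTop) (.of_forall hbound)
  rw [(ENNReal.tendsto_pow_atTop_nhds_zero_of_lt_one hq).limsup_eq] at hlimsup
  exact hpos.not_ge hlimsup

theorem expGrowth_of_pow_le_countLen {m : ℕ} (hm : 0 < m)
    (hL : ∀ k, 2 ^ k ≤ countLen L (k * m)) : ExpGrowth L := by
  refine ⟨1 / m, by positivity, zero_lt_one.trans_le (le_limsup_of_frequently_le' ?_)⟩
  refine frequently_atTop.2 fun N => ⟨N * m, Nat.le_mul_of_pos_right N hm, ?_⟩
  have hexp : 1 / (m : ℝ) * ((N * m : ℕ) : ℝ) = N := by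
    push_cast
    field_simp
  rw [hexp, ENNReal.rpow_natCast, ENNReal.le_div_iff_mul_le (by simp) (by simp), one_mul]
  exact_mod_cast hL N

end Growth

section AntichainGrowth

variable {α : Type*} {r : α → α → Prop}

theorem not_expAntichainGrowth_of_isChainLang {N : Set (List α)} (hN : IsChainLang r N) :
    ¬ ExpAntichainGrowth r N := by
  rintro ⟨L', hL'N, hanti, hgrowth⟩
  refine not_expGrowth_of_countLen_le_one (fun n => ?_) hgrowth
  have hsub : {w ∈ L' | w.length = n}.Subsingleton := fun w hw w' hw' => by
    by_contra hne
    exact hanti n w hw w' hw' hne (hN w (hL'N hw.1) w' (hL'N hw'.1))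
  exact (Set.ncard_le_one hsub.finite).2 hsub

theorem expAntichainGrowth_kStarLang [Std.Irrefl r] {M : Set (List α)} {x y : List α}
    (hx : x ∈ KStarLang M) (hy : y ∈ KStarLang M) (hxy : ¬ LexComp r x y)
    (hlen : x.length = y.length) : ExpAntichainGrowth r (KStarLang M) :=
  ⟨Set.range (encodeBits x y), Set.range_subset_iff.2 (encodeBits_mem_kStarLang hx hy),
    antichainFamily_range_encodeBits hxy hlen,
    expGrowth_of_pow_le_countLen (length_pos_of_not_lexComp hxy)
      fun k => (countLen_range_encodeBits hxy hlen k).ge⟩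

end AntichainGrowth

section EndMarker

variable {Sigma : Type*} [PartialOrder Sigma]

instance : Std.Irrefl (extRel0 : Option Sigma → Option Sigma → Prop) where
  irrefl
    | none => id
    | some a => lt_irrefl a

theorem lexComp_map_some_iff {u v : List Sigma} :
    LexComp extRel0 (u.map some) (v.map some) ↔ LexComp (· < ·) u v :=
  lexComp_map_iff (Option.some_injective _) fun _ _ => Iff.rfl

theorem lexComp_marked_of_lexR {u v : List Sigma} (h : LexR (· < ·) u v) (hne : u ≠ v)
    (s t : List (Option Sigma)) :
    LexComp extRel0 (u.map some ++ none :: s) (v.map some ++ none :: t) := by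
  induction h with
  | nil w =>
    obtain _ | ⟨c, w⟩ := w
    · exact absurd rfl hne
    · exact .inr (.head _ _ trivial)
  | head _ _ hlt => exact .inl (.head _ _ hlt)
  | cons x _ ih => exact (ih fun h => hne (h ▸ rfl)).imp (.cons _) (.cons _)

theorem isChainLang_kStarLang_marked {L : Set (List Sigma)} (hL : IsChainLang (· < ·) L) :
    IsChainLang extRel0 (KStarLang ((fun l : List Sigma => l.map some ++ [none]) '' L)) := by
  refine isChainLang_kStarLang ?_
  rintro _ ⟨u, hu, rfl⟩ _ ⟨v, hv, rfl⟩ hne s t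
  have huv : u ≠ v := by rintro rfl; exact hne rfl
  simp only [List.append_assoc, List.singleton_append]
  rcases hL u hu v hv with h | h
  · exact lexComp_marked_of_lexR h huv s t
  · exact (lexComp_marked_of_lexR h huv.symm t s).symm

end EndMarker

theorem kstar_exp_antichain_iff_not_chain_general {Sigma : Type*}
    [PartialOrder Sigma] (L : Set (List Sigma)) :
    ExpAntichainGrowth extRel0
        (KStarLang ((fun l : List Sigma => l.map some ++ [none]) '' L)) ↔
      ¬ IsChainLang (· < ·) L := by
  refine ⟨fun hgrowth hL => not_expAntichainGrowth_of_isChainLang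
    (isChainLang_kStarLang_marked hL) hgrowth, fun hL => ?_⟩
  obtain ⟨u, hu, v, hv, huv⟩ : ∃ u ∈ L, ∃ v ∈ L, ¬ LexComp (· < ·) u v := by
    simpa [IsChainLang] using hL
  have hmem : ∀ w ∈ L, w.map some ++ [none] ∈
      KStarLang ((fun l : List Sigma => l.map some ++ [none]) '' L) :=
    fun w hw => mem_kStarLang_of_mem ⟨w, hw, rfl⟩
  refine expAntichainGrowth_kStarLang (append_mem_kStarLang (hmem u hu) (hmem v hv))
    (append_mem_kStarLang (hmem v hv) (hmem u hu)) ?_ ?_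
  · rw [List.append_assoc, List.append_assoc]
    exact not_lexComp_append (lexComp_map_some_iff.not.2 huv) _ _
  · simp only [List.length_append, List.length_map, List.length_singleton]
    omega

/-- `(L·{0})*` has exponential antichain growth iff `L` is not a chain. -/
theorem kstar_exp_antichain_iff_not_chain {Sigma : Type*} [Fintype Sigma]
    [PartialOrder Sigma] (L : Set (List Sigma)) :
    ExpAntichainGrowth extRel0
        (KStarLang ((fun l : List Sigma => l.map some ++ [none]) '' L)) ↔
      ¬ IsChainLang (· < ·) L :=
  kstar_exp_antichain_iff_not_chain_general L
end

section
/- Let Σ_A and Σ_B be disjoint finite alphabets and Σ = Σ_A ∪ Σ_B. Call words w1, w2 ∈ Σ* inconsistent if w1 = w·a·w1′ and w2 = w·b·w2′ for some w, w1′, w2′ ∈ Σ* and distinct letters a, b ∈ Σ_A, and consistent otherwise; a set X ⊆ Σ* is consistent if every pair of words in X is consistent. Let ≤ be the partial order on Σ consisting of an arbitrary linear order on Σ_A, with every element of Σ_B incomparable to every other letter. Then X ⊆ Σ* is consistent if and only if X is a quasiantichain with respect to the lexicographic order induced by ≤. -/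
open Filter
open scoped ENNReal

/-- Two words over `Σ_A ∪ Σ_B` are inconsistent if they first differ on two distinct
letters of `Σ_A`. -/
def Inconsistent {A B : Type*} (w1 w2 : List (A ⊕ B)) : Prop :=
  ∃ (w w1' w2' : List (A ⊕ B)) (a b : A), a ≠ b ∧
    w1 = w ++ Sum.inl a :: w1' ∧ w2 = w ++ Sum.inl b :: w2'

/-- The partial order on `Σ_A ∪ Σ_B`: an arbitrary linear order on `Σ_A`, with every
element of `Σ_B` incomparable to every other letter. -/
def abOrder {A B : Type*} [LinearOrder A] : A ⊕ B → A ⊕ B → Prop :=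
  fun x y =>
    match x, y with
    | Sum.inl a, Sum.inl b => a < b
    | _, _ => False

/-!
Two words related by `LexR r` are either in prefix relation or first differ at letters `a`, `b`
with `r a b`; under `abOrder` such letters are exactly two distinct letters of `Σ_A`. So for a
single pair of words, inconsistency means being comparable without either being a prefix of the
other, which is the negation of the quasiantichain condition.
-/

namespace LexR

variable {α : Type*} {r : α → α → Prop}

theorem append_cons (w u v : List α) {a b : α} (hab : r a b) :
    LexR r (w ++ a :: u) (w ++ b :: v) := by
  induction w with
  | nil => exact LexR.head u v hab
  | cons x w ih => exact LexR.cons x ih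

theorem prefix_or_exists_append_cons {u v : List α} (h : LexR r u v) :
    u <+: v ∨ ∃ (w u' v' : List α) (a b : α), r a b ∧ u = w ++ a :: u' ∧ v = w ++ b :: v' := by
  induction h with
  | nil w => exact Or.inl List.nil_prefix
  | head w w' hab => exact Or.inr ⟨[], w, w', _, _, hab, rfl, rfl⟩
  | cons x _ ih =>
    rcases ih with hpre | ⟨w, u', v', a, b, hab, rfl, rfl⟩
    · exact Or.inl (List.cons_prefix_cons.2 ⟨rfl, hpre⟩)
    · exact Or.inr ⟨x :: w, u', v', a, b, hab, rfl, rfl⟩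

end LexR

namespace Inconsistent

variable {A B : Type*} {u v : List (A ⊕ B)}

theorem symm (h : Inconsistent u v) : Inconsistent v u := by
  obtain ⟨w, u', v', a, b, hab, rfl, rfl⟩ := h
  exact ⟨w, v', u', b, a, hab.symm, rfl, rfl⟩

theorem not_prefix (h : Inconsistent u v) : ¬ u <+: v := by
  obtain ⟨w, u', v', a, b, hab, rfl, rfl⟩ := h
  rw [List.prefix_append_right_inj, List.cons_prefix_cons]
  exact fun hpre => hab (Sum.inl.inj hpre.1)

theorem lexComp [LinearOrder A] (h : Inconsistent u v) : LexComp abOrder u v := by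
  obtain ⟨w, u', v', a, b, hab, rfl, rfl⟩ := h
  rcases hab.lt_or_gt with hlt | hgt
  · exact Or.inl (LexR.append_cons (r := abOrder) w u' v' (a := .inl a) (b := .inl b) hlt)
  · exact Or.inr (LexR.append_cons (r := abOrder) w v' u' (a := .inl b) (b := .inl a) hgt)

end Inconsistent

theorem inconsistent_of_lexR_of_not_prefix {A B : Type*} [LinearOrder A] {u v : List (A ⊕ B)}
    (h : LexR abOrder u v) (hpre : ¬ u <+: v) : Inconsistent u v := by
  rcases h.prefix_or_exists_append_cons with hpre' | ⟨w, u', v', a, b, hab, rfl, rfl⟩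
  · exact absurd hpre' hpre
  · match a, b, hab with
    | .inl a, .inl b, hab => exact ⟨w, u', v', a, b, ne_of_lt hab, rfl, rfl⟩

theorem inconsistent_iff_lexComp_and_not_prefix {A B : Type*} [LinearOrder A]
    {u v : List (A ⊕ B)} :
    Inconsistent u v ↔ LexComp abOrder u v ∧ ¬ u <+: v ∧ ¬ v <+: u := by
  refine ⟨fun h => ⟨h.lexComp, h.not_prefix, h.symm.not_prefix⟩, ?_⟩
  rintro ⟨huv | hvu, hpre_uv, hpre_vu⟩
  · exact inconsistent_of_lexR_of_not_prefix huv hpre_uv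
  · exact (inconsistent_of_lexR_of_not_prefix hvu hpre_vu).symm

theorem consistent_iff_quasiantichain_general {A B : Type*}
    [LinearOrder A] (X : Set (List (A ⊕ B))) :
    (∀ w1 ∈ X, ∀ w2 ∈ X, ¬ Inconsistent w1 w2) ↔ IsQuasiantichainLang abOrder X := by
  refine forall₂_congr fun u _ => forall₂_congr fun v _ => ?_
  rw [inconsistent_iff_lexComp_and_not_prefix]
  tauto

/-- A set of words is consistent iff it is a quasiantichain with respect to the
lexicographic order induced by `abOrder`. -/
theorem consistent_iff_quasiantichain {A B : Type*} [Fintype A] [Fintype B]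
    [LinearOrder A] (X : Set (List (A ⊕ B))) :
    (∀ w1 ∈ X, ∀ w2 ∈ X, ¬ Inconsistent w1 w2) ↔ IsQuasiantichainLang abOrder X :=
  consistent_iff_quasiantichain_general X
end
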